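/- For every integer k ≥ 1, the integer rational-tangle mosaic construction produces a suitably connected tangle mosaic with exactly |k| crossing tiles, where positive k uses only crossing tile T_10 and negative k uses only crossing tile T_9 along the diagonal of a modified Jordan-block tile matrix. -/
import Mathlib


/-- The four edge midpoints of a mosaic tile. -/
inductive Edge | top | bottom | left | right
deriving DecidableEq

/-- Connection points of the standard tiles `T_0, …, T_10`. -/
def conn (t : Fin 11) (e : Edge) : Bool :=
  match e with
  | .top    => t.val == 3 || t.val == 4 || t.val == 6 || decide (7 ≤ t.val)
  | .bottom => t.val == 1 || t.val == 2 || t.val == 6 || decide (7 ≤ t.val)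
  | .left   => t.val == 1 || t.val == 4 || t.val == 5 || decide (7 ≤ t.val)
  | .right  => t.val == 2 || t.val == 3 || t.val == 5 || decide (7 ≤ t.val)

/-- An `n`-mosaic is suitably connected: no connection point on the outer boundary,
and connection points match across every interior edge. -/
def SuitablyConnected {n : ℕ} (M : Fin n → Fin n → Fin 11) : Prop :=
  (∀ i j : Fin n,
      (i.val = 0 → conn (M i j) .top = false) ∧
      (i.val = n - 1 → conn (M i j) .bottom = false) ∧
      (j.val = 0 → conn (M i j) .left = false) ∧
      (j.val = n - 1 → conn (M i j) .right = false)) ∧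
  (∀ (i j : Fin n) (h : i.val + 1 < n),
      conn (M i j) .bottom = conn (M ⟨i.val + 1, h⟩ j) .top) ∧
  (∀ (i j : Fin n) (h : j.val + 1 < n),
      conn (M i j) .right = conn (M i ⟨j.val + 1, h⟩) .left)

/-- The number of crossing tiles (`T_9`, `T_10`) in a mosaic. -/
def crossingCount {n : ℕ} (M : Fin n → Fin n → Fin 11) : ℕ :=
  (Finset.univ.filter
    (fun p : Fin n × Fin n => (M p.1 p.2).val = 9 ∨ (M p.1 p.2).val = 10)).card

/-- Suitable connectivity relaxed at a set `E` of designated boundary endpoints: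
interior edges must still match, and no connection point may lie on the outer
boundary except at the points of `E`. -/
def SuitablyConnectedExcept {n : ℕ} (M : Fin n → Fin n → Fin 11)
    (E : Set ((Fin n × Fin n) × Edge)) : Prop :=
  (∀ i j : Fin n,
      (i.val = 0 → ((i, j), Edge.top) ∉ E → conn (M i j) .top = false) ∧
      (i.val = n - 1 → ((i, j), Edge.bottom) ∉ E → conn (M i j) .bottom = false) ∧
      (j.val = 0 → ((i, j), Edge.left) ∉ E → conn (M i j) .left = false) ∧
      (j.val = n - 1 → ((i, j), Edge.right) ∉ E → conn (M i j) .right = false)) ∧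
  (∀ (i j : Fin n) (h : i.val + 1 < n),
      conn (M i j) .bottom = conn (M ⟨i.val + 1, h⟩ j) .top) ∧
  (∀ (i j : Fin n) (h : j.val + 1 < n),
      conn (M i j) .right = conn (M i ⟨j.val + 1, h⟩) .left)

/-- The integer rational-tangle mosaic of a nonzero integer `k`: crossing tiles
(`T_10` if `k > 0`, `T_9` if `k < 0`) on the diagonal of a modified Jordan-block
tile matrix, with arc tiles `T_1` and `T_3` on the super- and subdiagonal. -/
def ratTangle (k : ℤ) : Fin k.natAbs → Fin k.natAbs → Fin 11 :=
  fun i j =>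
    if i.val = j.val then (if 0 < k then 10 else 9)
    else if j.val = i.val + 1 then 1
    else if i.val = j.val + 1 then 3
    else 0

/-- The four designated boundary endpoints of the integer tangle mosaic: the top
and left edges of the top-left tile and the bottom and right edges of the
bottom-right tile. -/
def tangleEndpoints (n : ℕ) : Set ((Fin n × Fin n) × Edge) :=
  {p | (p.1.1.val = 0 ∧ p.1.2.val = 0 ∧ (p.2 = Edge.top ∨ p.2 = Edge.left)) ∨
       (p.1.1.val = n - 1 ∧ p.1.2.val = n - 1 ∧ (p.2 = Edge.bottom ∨ p.2 = Edge.right))}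

/-- For every nonzero integer `k`, the integer rational-tangle mosaic construction
produces a suitably connected tangle mosaic (suitable connectivity relaxed at the
four boundary endpoints) with exactly `|k|` crossing tiles, where positive `k`
uses only the crossing tile `T_10` and negative `k` uses only `T_9`. -/
theorem ratTangle_suitably_connected (k : ℤ) (hk : k ≠ 0) :
    SuitablyConnectedExcept (ratTangle k) (tangleEndpoints k.natAbs) ∧
    crossingCount (ratTangle k) = k.natAbs ∧
    (∀ i j : Fin k.natAbs,
      ((ratTangle k) i j).val = 9 ∨ ((ratTangle k) i j).val = 10 →
        (ratTangle k) i j = if 0 < k then 10 else 9) := by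
  refine ⟨⟨?_, ?_, ?_⟩, ?_, ?_⟩
  · intro i j
    refine ⟨?_, ?_, ?_, ?_⟩
    · intro h hE
      by_cases hj : j.val = 0
      · exact absurd (Or.inl ⟨h, hj, Or.inl rfl⟩) hE
      · have := j.isLt
        unfold ratTangle
        split_ifs <;> first | decide | omega
    · intro h hE
      by_cases hj : j.val = k.natAbs - 1
      · exact absurd (Or.inr ⟨h, hj, Or.inl rfl⟩) hE
      · have := j.isLt
        have := i.isLt
        unfold ratTangle
        split_ifs <;> first | decide | omega
    · intro h hE
      by_cases hi : i.val = 0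
      · exact absurd (Or.inl ⟨hi, h, Or.inr rfl⟩) hE
      · have := i.isLt
        unfold ratTangle
        split_ifs <;> first | decide | omega
    · intro h hE
      by_cases hi : i.val = k.natAbs - 1
      · exact absurd (Or.inr ⟨hi, h, Or.inr rfl⟩) hE
      · have := i.isLt
        have := j.isLt
        unfold ratTangle
        split_ifs <;> first | decide | omega
  · intro i j h
    unfold ratTangle
    simp only []
    split_ifs <;> first | decide | omega
  · intro i j h
    unfold ratTangle
    simp only []
    split_ifs <;> first | decide | omega
  · have hn : 0 < k.natAbs := Int.natAbs_pos.mpr hk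
    unfold crossingCount
    have key : (Finset.univ.filter
        (fun p : Fin k.natAbs × Fin k.natAbs =>
          ((ratTangle k) p.1 p.2).val = 9 ∨ ((ratTangle k) p.1 p.2).val = 10)) =
        Finset.univ.filter (fun p : Fin k.natAbs × Fin k.natAbs => p.1 = p.2) := by
      ext p
      simp only [Finset.mem_filter, Finset.mem_univ, true_and, Fin.ext_iff]
      unfold ratTangle
      split_ifs <;> first | decide | (constructor <;> intro <;> omega) | simp_all
    rw [key]
    have himg : Finset.univ.filter (fun p : Fin k.natAbs × Fin k.natAbs => p.1 = p.2) =
        Finset.univ.image (fun i : Fin k.natAbs => (i, i)) := by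
      ext p
      simp only [Finset.mem_filter, Finset.mem_univ, true_and, Finset.mem_image]
      constructor
      · intro h; exact ⟨p.1, by rw [Prod.ext_iff]; exact ⟨rfl, h⟩⟩
      · rintro ⟨a, ha⟩; rw [← ha]
    rw [himg, Finset.card_image_of_injective _ (fun a b hab => (Prod.ext_iff.mp hab).1),
      Finset.card_univ, Fintype.card_fin]
  · intro i j h
    unfold ratTangle at h ⊢
    split_ifs at h ⊢ <;> first | rfl | (exfalso; revert h; decide) | omega
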